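/- Assume f and g are differentiable at a point x ∈ ℝ^d and g(x) > 0, with g continuous and positive in a neighborhood of x. Then as δ → 0 in ℝ^d, KL(x,δ) = δ^T I(x) δ + o(‖δ‖²), where I(x) = g(x)^{-1} ∇f(x) ∇f(x)^T + (2 g(x)²)^{-1} ∇g(x) ∇g(x)^T; that is, (KL(x,δ) − δ^T I(x) δ)/‖δ‖² → 0 as δ → 0. -/

import Mathlib

open MeasureTheory Real Filter Topology

/-- The conditional Gaussian density `ρ(y|x) = (2π g(x))^{-1/2} exp(−(y − f(x))²/(2 g(x)))`. -/
noncomputable def condDensity (d : ℕ) (f g : (Fin d → ℝ) → ℝ) (x : Fin d → ℝ) (y : ℝ) : ℝ :=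
  (Real.sqrt (2 * Real.pi * g x))⁻¹ * Real.exp (-(y - f x) ^ 2 / (2 * g x))

/-- The symmetric Kullback–Leibler (J-)divergence between the conditional densities
at `x + δ` and `x`. -/
noncomputable def symKL (d : ℕ) (f g : (Fin d → ℝ) → ℝ) (x δ : Fin d → ℝ) : ℝ :=
  ∫ y : ℝ, (condDensity d f g (x + δ) y - condDensity d f g x y) *
    Real.log (condDensity d f g (x + δ) y / condDensity d f g x y)

/-!
Both densities are Gaussian, so the log-likelihood ratio `log (ρ(y|x+δ) / ρ(y|x))` is a quadratic
polynomial in `y`, and integrating it against the two Gaussians only needs their first two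
moments. This gives the J-divergence in closed form,
`(Δf)² (g(x+δ) + g(x)) / (2 g(x+δ) g(x)) + (Δg)² / (2 g(x+δ) g(x))` with `Δf = f(x+δ) − f(x)`,
`Δg = g(x+δ) − g(x)`. Replacing `Δf, Δg` by the differentials and `g(x+δ)` by `g(x)` in the
weights costs `o(‖δ‖²)`.
-/

open scoped NNReal

namespace ProbabilityTheory

variable {m : ℝ} {v : ℝ≥0}

lemma integral_sq_gaussianReal (m : ℝ) (v : ℝ≥0) : ∫ y, y ^ 2 ∂gaussianReal m v = v + m ^ 2 := by
  have h := variance_eq_sub (memLp_id_gaussianReal (μ := m) (v := v) 2)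
  simp only [variance_id_gaussianReal, Pi.pow_apply, id_eq, integral_id_gaussianReal] at h
  linarith

lemma integral_sq_sub_gaussianReal (m c : ℝ) (v : ℝ≥0) :
    ∫ y, (y - c) ^ 2 ∂gaussianReal m v = v + (m - c) ^ 2 := by
  rw [← integral_sq_gaussianReal, ← gaussianReal_map_sub_const,
    integral_map (by fun_prop) (by fun_prop)]

lemma integrable_sq_sub_gaussianReal (m c : ℝ) (v : ℝ≥0) :
    Integrable (fun y => (y - c) ^ 2) (gaussianReal m v) :=
  ((memLp_id_gaussianReal 2).sub (memLp_const c)).integrable_sq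

lemma integrable_gaussianReal_iff_integrable_mul (hv : v ≠ 0) {φ : ℝ → ℝ} :
    Integrable φ (gaussianReal m v) ↔ Integrable fun y => gaussianPDFReal m v y * φ y := by
  rw [gaussianReal_of_var_ne_zero _ hv, integrable_withDensity_iff_integrable_smul'
    (measurable_gaussianPDF m v) (ae_of_all _ fun _ => gaussianPDF_lt_top)]
  simp [toReal_gaussianPDF]

lemma log_gaussianPDFReal (m : ℝ) (v : ℝ≥0) (y : ℝ) :
    log (gaussianPDFReal m v y) = -log (2 * π * v) / 2 - (y - m) ^ 2 / (2 * v) := by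
  rcases eq_or_ne v 0 with rfl | hv
  · simp
  have hsqrt : 0 < √(2 * π * v) := by positivity
  rw [gaussianPDFReal, log_mul (inv_pos.2 hsqrt).ne' (exp_pos _).ne', log_inv,
    log_sqrt (by positivity), log_exp]
  ring

variable {v₁ v₂ : ℝ≥0}

lemma integral_sub_mul_log_div_gaussianPDFReal (m₁ m₂ : ℝ) (hv₁ : v₁ ≠ 0) (hv₂ : v₂ ≠ 0) :
    ∫ y, (gaussianPDFReal m₁ v₁ y - gaussianPDFReal m₂ v₂ y) *
        log (gaussianPDFReal m₁ v₁ y / gaussianPDFReal m₂ v₂ y) =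
      (m₁ - m₂) ^ 2 * ((v₁ + v₂) / (2 * v₁ * v₂)) + (v₁ - v₂ : ℝ) ^ 2 / (2 * v₁ * v₂) := by
  set C := (log (2 * π * v₂) - log (2 * π * v₁)) / 2
  set ℓ : ℝ → ℝ := fun y => C + (2 * v₂ : ℝ)⁻¹ * (y - m₂) ^ 2 - (2 * v₁ : ℝ)⁻¹ * (y - m₁) ^ 2
  have hℓ (y : ℝ) : log (gaussianPDFReal m₁ v₁ y / gaussianPDFReal m₂ v₂ y) = ℓ y := by
    rw [log_div (gaussianPDFReal_pos _ _ _ hv₁).ne' (gaussianPDFReal_pos _ _ _ hv₂).ne',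
      log_gaussianPDFReal, log_gaussianPDFReal]
    ring
  have hquad (m : ℝ) (v : ℝ≥0) : Integrable ℓ (gaussianReal m v) ∧ ∫ y, ℓ y ∂gaussianReal m v =
      C + (2 * v₂ : ℝ)⁻¹ * (v + (m - m₂) ^ 2) - (2 * v₁ : ℝ)⁻¹ * (v + (m - m₁) ^ 2) := by
    have h₁ := (integrable_sq_sub_gaussianReal m m₁ v).const_mul (2 * v₁ : ℝ)⁻¹
    have h₂ := (integrable_sq_sub_gaussianReal m m₂ v).const_mul (2 * v₂ : ℝ)⁻¹
    have h₀ : Integrable (fun y => C + (2 * v₂ : ℝ)⁻¹ * (y - m₂) ^ 2) (gaussianReal m v) :=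
      (integrable_const C).add h₂
    refine ⟨h₀.sub h₁, ?_⟩
    rw [integral_sub h₀ h₁, integral_add (integrable_const C) h₂,
      integral_const_mul, integral_const_mul, integral_sq_sub_gaussianReal,
      integral_sq_sub_gaussianReal]
    simp
  have hdens (m : ℝ) (v : ℝ≥0) (hv : v ≠ 0) :
      ∫ y, gaussianPDFReal m v y * ℓ y = ∫ y, ℓ y ∂gaussianReal m v :=
    (integral_gaussianReal_eq_integral_smul hv).symm
  simp_rw [hℓ, sub_mul]
  rw [integral_sub ((integrable_gaussianReal_iff_integrable_mul hv₁).1 (hquad _ _).1)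
      ((integrable_gaussianReal_iff_integrable_mul hv₂).1 (hquad _ _).1),
    hdens _ _ hv₁, hdens _ _ hv₂, (hquad _ _).2, (hquad _ _).2]
  have : (v₁ : ℝ) ≠ 0 := by exact_mod_cast hv₁
  have : (v₂ : ℝ) ≠ 0 := by exact_mod_cast hv₂
  field_simp
  ring

end ProbabilityTheory

open ProbabilityTheory Asymptotics

lemma condDensity_eq_gaussianPDFReal {d : ℕ} {f g : (Fin d → ℝ) → ℝ} {z : Fin d → ℝ}
    (hz : 0 ≤ g z) : condDensity d f g z = gaussianPDFReal (f z) (g z).toNNReal := by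
  ext y
  simp [condDensity, gaussianPDFReal, Real.coe_toNNReal _ hz]

lemma symKL_eq {d : ℕ} {f g : (Fin d → ℝ) → ℝ} {x δ : Fin d → ℝ} (hx : 0 < g x)
    (hxδ : 0 < g (x + δ)) :
    symKL d f g x δ = (f (x + δ) - f x) ^ 2 * ((g (x + δ) + g x) / (2 * g (x + δ) * g x)) +
      (g (x + δ) - g x) ^ 2 / (2 * g (x + δ) * g x) := by
  rw [symKL, condDensity_eq_gaussianPDFReal hx.le, condDensity_eq_gaussianPDFReal hxδ.le,
    integral_sub_mul_log_div_gaussianPDFReal _ _ (by simpa using hxδ) (by simpa using hx),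
    Real.coe_toNNReal _ hx.le, Real.coe_toNNReal _ hxδ.le]

lemma HasFDerivAt.sq_sub_mul_isLittleO {E : Type*} [NormedAddCommGroup E] [NormedSpace ℝ E]
    {φ : E → ℝ} {L : E →L[ℝ] ℝ} {x : E} (hφ : HasFDerivAt φ L x) {w : E → ℝ} {c : ℝ}
    (hw : Tendsto w (𝓝 0) (𝓝 c)) :
    (fun δ => (φ (x + δ) - φ x) ^ 2 * w δ - L δ ^ 2 * c) =o[𝓝 0] fun δ => ‖δ‖ ^ 2 := by
  have hrem : (fun δ => φ (x + δ) - φ x - L δ) =o[𝓝 0] fun δ => ‖δ‖ :=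
    (hasFDerivAt_iff_isLittleO_nhds_zero.mp hφ).norm_right
  have hL : (fun δ => L δ) =O[𝓝 0] fun δ => ‖δ‖ := (L.isBigO_id _).norm_right
  have hsum : (fun δ => φ (x + δ) - φ x + L δ) =O[𝓝 0] fun δ => ‖δ‖ :=
    (hrem.isBigO.add (hL.const_mul_left 2)).congr_left fun δ => by ring
  have hw' : (fun δ => w δ - c) =o[𝓝 0] fun _ => (1 : ℝ) :=
    (isLittleO_one_iff ℝ).mpr (tendsto_sub_nhds_zero_iff.mpr hw)
  -- `a² w − b² c = (a − b)(a + b) w + b² (w − c)`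
  have h := ((hrem.mul_isBigO hsum).mul_isBigO (hw.isBigO_one ℝ)).add
    ((hL.mul hL).mul_isLittleO hw')
  exact h.congr (fun δ => by ring) (fun δ => by ring)

theorem stmt_5_general (d : ℕ) (f g : (Fin d → ℝ) → ℝ)
    (x : Fin d → ℝ) (hf : DifferentiableAt ℝ f x) (hg : DifferentiableAt ℝ g x)
    (hgx : 0 < g x) :
    Tendsto
      (fun δ : Fin d → ℝ =>
        (symKL d f g x δ -
            ((fderiv ℝ f x δ) ^ 2 / g x + (fderiv ℝ g x δ) ^ 2 / (2 * g x ^ 2))) / ‖δ‖ ^ 2)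
      (𝓝[≠] (0 : Fin d → ℝ)) (𝓝 0) := by
  have hgc : Tendsto (fun δ => g (x + δ)) (𝓝 0) (𝓝 (g x)) :=
    hg.continuousAt.tendsto.comp (by simpa using (continuous_const_add x).tendsto 0)
  have hden : Tendsto (fun δ => 2 * g (x + δ) * g x) (𝓝 0) (𝓝 (2 * g x * g x)) :=
    (hgc.const_mul 2).mul_const _
  have hden_ne : 2 * g x * g x ≠ 0 := by positivity
  have hf' := hf.hasFDerivAt.sq_sub_mul_isLittleO
    (w := fun δ => (g (x + δ) + g x) / (2 * g (x + δ) * g x)) ((hgc.add_const _).div hden hden_ne)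
  have hg' := hg.hasFDerivAt.sq_sub_mul_isLittleO
    (w := fun δ => 1 / (2 * g (x + δ) * g x)) (tendsto_const_nhds.div hden hden_ne)
  refine (((hf'.add hg').congr' ?_ EventuallyEq.rfl).tendsto_div_nhds_zero).mono_left
    nhdsWithin_le_nhds
  filter_upwards [hgc.eventually (lt_mem_nhds hgx)] with δ hδ
  rw [symKL_eq hgx hδ]
  field_simp
  ring

/-- If `f, g` are differentiable at `x`, `g(x) > 0`, and `g` is continuous and
positive on a neighborhood of `x`, then `KL(x,δ) = δᵀ I(x) δ + o(‖δ‖²)` as `δ → 0`, where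
`δᵀ I(x) δ = (∇f(x)·δ)²/g(x) + (∇g(x)·δ)²/(2 g(x)²)`; that is,
`(KL(x,δ) − δᵀ I(x) δ)/‖δ‖² → 0` as `δ → 0`. -/
theorem stmt_5 (d : ℕ) (hd : 1 ≤ d) (f g : (Fin d → ℝ) → ℝ)
    (x : Fin d → ℝ) (hf : DifferentiableAt ℝ f x) (hg : DifferentiableAt ℝ g x)
    (hgx : 0 < g x) (U : Set (Fin d → ℝ)) (hU : U ∈ nhds x)
    (hgU : ContinuousOn g U) (hgUpos : ∀ z ∈ U, 0 < g z) :
    Tendsto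
      (fun δ : Fin d → ℝ =>
        (symKL d f g x δ -
            ((fderiv ℝ f x δ) ^ 2 / g x + (fderiv ℝ g x δ) ^ 2 / (2 * g x ^ 2))) / ‖δ‖ ^ 2)
      (𝓝[≠] (0 : Fin d → ℝ)) (𝓝 0) :=
  stmt_5_general d f g x hf hg hgx
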